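/- arXiv:2002.00373 — 3 statements merged into one kernel-verified Lean document; each statement's English description precedes it below -/
import Mathlib

section
/- Let U ⊆ ℝ³ be open, let u : U → ℝ be smooth with u₃(x) ≠ 0 for all x ∈ U, and let λ ∈ ℝ satisfy x₁ ≠ λ and x₂ ≠ λ for all x = (x₁,x₂,x₃) ∈ U. Define the vector fields X = ∂₁ − ((x₃−λ)/(x₁−λ))·(u₁/u₃)·∂₃ and Y = ∂₂ − ((x₃−λ)/(x₂−λ))·(u₂/u₃)·∂₃ on U. Then at every point x ∈ U one has the identity [X,Y](x) = −((x₃−λ)/((x₁−λ)(x₂−λ)·u₃(x)²))·E(x)·∂₃, where E = (x₁−x₂)u₃u₁₂ + (x₂−x₃)u₁u₂₃ + (x₃−x₁)u₂u₁₃. In particular, if u satisfies the deformed Veronese web equation E = 0 on U, then [X,Y] = 0 identically on U. -/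
open scoped ContDiff

noncomputable section

/-- `pd i u x` is the partial derivative `∂u/∂xᵢ` at `x`. -/
def pd {n : ℕ} (i : Fin n) (u : (Fin n → ℝ) → ℝ) (x : Fin n → ℝ) : ℝ :=
  fderiv ℝ u x (Pi.single i 1)

/-- `pd2 i j u x` is the second partial derivative `∂²u/∂xᵢ∂xⱼ` at `x`. -/
def pd2 {n : ℕ} (i j : Fin n) (u : (Fin n → ℝ) → ℝ) (x : Fin n → ℝ) : ℝ :=
  pd i (pd j u) x

/-- Lie bracket of vector fields : `[X,Y](x) = DY(x)(X(x)) − DX(x)(Y(x))`. -/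
def lieBr {n : ℕ} (X Y : (Fin n → ℝ) → (Fin n → ℝ)) (x : Fin n → ℝ) : Fin n → ℝ :=
  fderiv ℝ Y x (X x) - fderiv ℝ X x (Y x)

/-- The deformed Veronese web operator
`(x₁−x₂)u₃u₁₂ + (x₂−x₃)u₁u₂₃ + (x₃−x₁)u₂u₁₃` (indices shifted to `0,1,2`). -/
def verE (u : (Fin 3 → ℝ) → ℝ) (x : Fin 3 → ℝ) : ℝ :=
  (x 0 - x 1) * pd 2 u x * pd2 0 1 u x
  + (x 1 - x 2) * pd 0 u x * pd2 1 2 u x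
  + (x 2 - x 0) * pd 1 u x * pd2 0 2 u x

/-!
Both fields have the form `∂ᵢ − f ∂₃` with constant `∂ᵢ`, so their bracket is again a multiple
of `∂₃`, with coefficient `∂₂f − g ∂₃f − (∂₁g − f ∂₃g)`. Expanding the partial derivatives of the
two coefficients by the quotient rule and identifying mixed second partials of `u` (which is
`C²`), this coefficient becomes the stated multiple of `E`.
-/

section PartialDerivative

variable {n : ℕ} {φ ψ : (Fin n → ℝ) → ℝ} {x : Fin n → ℝ}

lemma HasFDerivAt.pd_eq {φ' : (Fin n → ℝ) →L[ℝ] ℝ} (h : HasFDerivAt φ φ' x) (i : Fin n) :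
    pd i φ x = φ' (Pi.single i 1) := by
  rw [pd, h.fderiv]

lemma pd_mul (i : Fin n) (hφ : DifferentiableAt ℝ φ x) (hψ : DifferentiableAt ℝ ψ x) :
    pd i (fun y => φ y * ψ y) x = pd i φ x * ψ x + φ x * pd i ψ x := by
  refine ((hφ.hasFDerivAt.mul hψ.hasFDerivAt).pd_eq i).trans ?_
  simp only [add_apply, smul_apply, smul_eq_mul, pd]
  ring

lemma pd_div (i : Fin n) (hφ : DifferentiableAt ℝ φ x) (hψ : DifferentiableAt ℝ ψ x)
    (hψx : ψ x ≠ 0) :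
    pd i (fun y => φ y / ψ y) x = (pd i φ x * ψ x - φ x * pd i ψ x) / ψ x ^ 2 := by
  have hinv := (hasDerivAt_inv hψx).comp_hasFDerivAt x hψ.hasFDerivAt
  simp only [div_eq_mul_inv]
  refine ((hφ.hasFDerivAt.mul hinv).pd_eq i).trans ?_
  simp only [add_apply, smul_apply, smul_eq_mul, pd, Function.comp_def]
  field_simp
  ring

lemma differentiableAt_fun_div (hφ : DifferentiableAt ℝ φ x) (hψ : DifferentiableAt ℝ ψ x)
    (hψx : ψ x ≠ 0) : DifferentiableAt ℝ (fun y => φ y / ψ y) x := by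
  simpa only [div_eq_mul_inv] using hφ.fun_mul (hψ.fun_inv hψx)

lemma differentiableAt_apply_sub_const (j : Fin n) (c : ℝ) :
    DifferentiableAt ℝ (fun y : Fin n → ℝ => y j - c) x :=
  (hasFDerivAt_apply j x).differentiableAt.sub_const c

lemma pd_sub_const_apply (i j : Fin n) (c : ℝ) :
    pd i (fun y => y j - c) x = (Pi.single i 1 : Fin n → ℝ) j :=
  ((hasFDerivAt_apply j x).sub_const c).pd_eq i

lemma differentiableAt_pd (i : Fin n) (hφ : ContDiffAt ℝ 2 φ x) :
    DifferentiableAt ℝ (pd i φ) x :=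
  ((hφ.fderiv_right (m := 1) (by norm_num)).differentiableAt (by norm_num)).clm_apply
    (differentiableAt_const _)

lemma pd2_eq_fderiv_fderiv (i j : Fin n) (hφ : ContDiffAt ℝ 2 φ x) :
    pd2 i j φ x = fderiv ℝ (fderiv ℝ φ) x (Pi.single i 1) (Pi.single j 1) := by
  have hD := (hφ.fderiv_right (m := 1) (by norm_num)).differentiableAt (by norm_num)
  refine ((hD.hasFDerivAt.clm_apply (hasFDerivAt_const (Pi.single j 1) x)).pd_eq i).trans ?_
  simp

lemma pd2_comm (i j : Fin n) (hφ : ContDiffAt ℝ 2 φ x) : pd2 i j φ x = pd2 j i φ x := by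
  rw [pd2_eq_fderiv_fderiv i j hφ, pd2_eq_fderiv_fderiv j i hφ]
  exact hφ.isSymmSndFDerivAt (by simp) _ _

end PartialDerivative

lemma lieBr_single_sub_smul_single {n : ℕ} {f g : (Fin n → ℝ) → ℝ} {x : Fin n → ℝ}
    (i j k : Fin n) (hf : DifferentiableAt ℝ f x) (hg : DifferentiableAt ℝ g x) :
    lieBr (fun y => Pi.single i 1 - f y • Pi.single k 1)
        (fun y => Pi.single j 1 - g y • Pi.single k 1) x
      = (pd j f x - g x * pd k f x - (pd i g x - f x * pd k g x)) • Pi.single k 1 := by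
  have hX : HasFDerivAt (fun y => Pi.single i 1 - f y • Pi.single k 1)
      (0 - (fderiv ℝ f x).smulRight (Pi.single k 1)) x :=
    (hasFDerivAt_const _ x).sub (hf.hasFDerivAt.smul_const _)
  have hY : HasFDerivAt (fun y => Pi.single j 1 - g y • Pi.single k 1)
      (0 - (fderiv ℝ g x).smulRight (Pi.single k 1)) x :=
    (hasFDerivAt_const _ x).sub (hg.hasFDerivAt.smul_const _)
  rw [lieBr, hX.fderiv, hY.fderiv]
  simp only [zero_sub, map_sub, map_smul, neg_apply, ContinuousLinearMap.smulRight_apply, pd]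
  module

def laxCoeff (u : (Fin 3 → ℝ) → ℝ) (lam : ℝ) (i : Fin 3) (y : Fin 3 → ℝ) : ℝ :=
  (y 2 - lam) / (y i - lam) * (pd i u y / pd 2 u y)

section LaxCoeff

variable {u : (Fin 3 → ℝ) → ℝ} {lam : ℝ} {i : Fin 3} {x : Fin 3 → ℝ}

lemma differentiableAt_laxCoeff (hu : ContDiffAt ℝ 2 u x) (hi : x i ≠ lam)
    (hu2 : pd 2 u x ≠ 0) : DifferentiableAt ℝ (laxCoeff u lam i) x :=
  (differentiableAt_fun_div (differentiableAt_apply_sub_const 2 lam)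
      (differentiableAt_apply_sub_const i lam) (sub_ne_zero.2 hi)).mul
    (differentiableAt_fun_div (differentiableAt_pd i hu) (differentiableAt_pd 2 hu) hu2)

lemma pd_laxCoeff (j : Fin 3) (hu : ContDiffAt ℝ 2 u x) (hi : x i ≠ lam)
    (hu2 : pd 2 u x ≠ 0) :
    pd j (laxCoeff u lam i) x
      = ((Pi.single j 1 : Fin 3 → ℝ) 2 * (x i - lam) - (x 2 - lam) * (Pi.single j 1 : Fin 3 → ℝ) i)
          / (x i - lam) ^ 2 * (pd i u x / pd 2 u x)
        + (x 2 - lam) / (x i - lam)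
          * ((pd2 j i u x * pd 2 u x - pd i u x * pd2 j 2 u x) / pd 2 u x ^ 2) := by
  have h2 := differentiableAt_apply_sub_const (x := x) 2 lam
  have hi' := differentiableAt_apply_sub_const (x := x) i lam
  have hui := differentiableAt_pd i hu
  have hu2' := differentiableAt_pd 2 hu
  unfold laxCoeff
  rw [pd_mul j (differentiableAt_fun_div h2 hi' (sub_ne_zero.2 hi))
      (differentiableAt_fun_div hui hu2' hu2),
    pd_div j h2 hi' (sub_ne_zero.2 hi), pd_div j hui hu2' hu2,
    pd_sub_const_apply, pd_sub_const_apply, pd2, pd2]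

end LaxCoeff

/-- the Lie bracket of the Lax vector fields of the deformed Veronese web
equation is proportional to `∂₃` with coefficient
`−((x₃−λ)/((x₁−λ)(x₂−λ)u₃²))·E`; in particular it vanishes on solutions. -/
theorem statement0 (U : Set (Fin 3 → ℝ)) (hU : IsOpen U)
    (u : (Fin 3 → ℝ) → ℝ) (hu : ContDiffOn ℝ ∞ u U)
    (hu3 : ∀ x ∈ U, pd 2 u x ≠ 0)
    (lam : ℝ) (hlam : ∀ x ∈ U, x 0 ≠ lam ∧ x 1 ≠ lam)
    (X Y : (Fin 3 → ℝ) → (Fin 3 → ℝ))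
    (hX : X = fun x => (Pi.single 0 1 : Fin 3 → ℝ)
        - (((x 2 - lam) / (x 0 - lam)) * (pd 0 u x / pd 2 u x)) • (Pi.single 2 1 : Fin 3 → ℝ))
    (hY : Y = fun x => (Pi.single 1 1 : Fin 3 → ℝ)
        - (((x 2 - lam) / (x 1 - lam)) * (pd 1 u x / pd 2 u x)) • (Pi.single 2 1 : Fin 3 → ℝ)) :
    (∀ x ∈ U, lieBr X Y x
        = (-((x 2 - lam) / ((x 0 - lam) * (x 1 - lam) * (pd 2 u x) ^ 2)) * verE u x)
            • (Pi.single 2 1 : Fin 3 → ℝ))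
    ∧ ((∀ x ∈ U, verE u x = 0) → ∀ x ∈ U, lieBr X Y x = 0) := by
  have bracket (x : Fin 3 → ℝ) (hx : x ∈ U) : lieBr X Y x
      = (-((x 2 - lam) / ((x 0 - lam) * (x 1 - lam) * (pd 2 u x) ^ 2)) * verE u x)
          • (Pi.single 2 1 : Fin 3 → ℝ) := by
    obtain ⟨hx0, hx1⟩ := hlam x hx
    have hu2 := hu3 x hx
    have hux : ContDiffAt ℝ 2 u x :=
      (hu.contDiffAt (hU.mem_nhds hx)).of_le (WithTop.coe_le_coe.2 le_top)
    have hX' : X = fun y => Pi.single 0 1 - laxCoeff u lam 0 y • Pi.single 2 1 := hX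
    have hY' : Y = fun y => Pi.single 1 1 - laxCoeff u lam 1 y • Pi.single 2 1 := hY
    rw [hX', hY', lieBr_single_sub_smul_single 0 1 2 (differentiableAt_laxCoeff hux hx0 hu2)
      (differentiableAt_laxCoeff hux hx1 hu2)]
    congr 1
    simp only [pd_laxCoeff _ hux hx0 hu2, pd_laxCoeff _ hux hx1 hu2, laxCoeff, verE,
      pd2_comm 1 0 hux, pd2_comm 2 0 hux, pd2_comm 2 1 hux, Pi.single_eq_same,
      Pi.single_eq_of_ne, ne_eq, Fin.reduceEq, not_false_eq_true]
    field_simp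
    ring
  exact ⟨bracket, fun hE x hx => by rw [bracket x hx, hE x hx, mul_zero, zero_smul]⟩
end
end

section
/- Let U ⊆ ℝ⁴ be open with x₃ ≠ 0 for all x ∈ U, and let u : U → ℝ be a smooth solution of the equation u₁₃ + u₂₄ + x₃(u₁₁u₂₂ − u₁₂²) = 0 on U. For λ ∈ ℝ define the vector fields X = ∂₄ + x₃(u₁₁∂₂ − u₁₂∂₁) + ((λ−x₂)/x₃)∂₁ and Y = ∂₃ + x₃(u₂₂∂₁ − u₁₂∂₂) − ((λ−x₂)/x₃)∂₂. Then for every λ ∈ ℝ and every x ∈ U, the vector [X,Y](x) lies in the linear span of X(x) and Y(x). -/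
open scoped ContDiff

noncomputable section

/-!
Write `F = u₁₃ + u₂₄ + x₃ (u₁₁ u₂₂ - u₁₂²)` and `p = (λ - x₂) / x₃`. The `∂₃, ∂₄` components of
`X` and `Y` are constant, so `[X,Y]` only has `∂₁, ∂₂` components `X(Yⁱ) - Y(Xⁱ)`. In these the
spectral parameter drops out, since `Y(p) = u₁₂` and `X(p) = -u₁₁` cancel the derivatives of the
factor `x₃`; by the symmetry of third derivatives what remains is `[X,Y] = x₃ (∂₂F ∂₁ - ∂₁F ∂₂)`.
On a solution `F` vanishes on the open set `U`, hence so do its partial derivatives, and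
`[X,Y] = 0`.
-/

open scoped Topology

section PartialDerivatives

variable {n : ℕ} {f g : (Fin n → ℝ) → ℝ} {x : Fin n → ℝ}

lemma hasFDerivAt_coord (k : Fin n) :
    HasFDerivAt (fun y : Fin n → ℝ => y k) (ContinuousLinearMap.proj (R := ℝ) k) x :=
  hasFDerivAt_apply k x

lemma fderiv_apply_eq_sum_pd (v : Fin n → ℝ) : fderiv ℝ f x v = ∑ i, v i * pd i f x := by
  conv_lhs => rw [pi_eq_sum_univ' v]
  simp [pd, map_sum]

lemma pd_congr (h : f =ᶠ[𝓝 x] g) (i : Fin n) : pd i f x = pd i g x := by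
  rw [pd, pd, h.fderiv_eq]

lemma ContDiffAt.pd {k m : WithTop ℕ∞} (hf : ContDiffAt ℝ k f x) (hmk : m + 1 ≤ k) (i : Fin n) :
    ContDiffAt ℝ m (pd i f) x :=
  (hf.fderiv_right hmk).clm_apply contDiffAt_const

lemma ContDiffAt.differentiableAt_pd2 (hf : ContDiffAt ℝ 3 f x) (i j : Fin n) :
    DifferentiableAt ℝ (pd2 i j f) x :=
  ((hf.pd (m := 2) (by norm_num) j).pd (m := 1) (by norm_num) i).differentiableAt one_ne_zero

lemma pd_pd_comm (hf : ContDiffAt ℝ 2 f x) (i j : Fin n) : pd i (pd j f) x = pd j (pd i f) x := by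
  have hsymm : IsSymmSndFDerivAt ℝ f x := hf.isSymmSndFDerivAt (by simp)
  have hd : DifferentiableAt ℝ (fderiv ℝ f) x :=
    (hf.fderiv_right (m := 1) le_rfl).differentiableAt one_ne_zero
  have hpd : ∀ i j, pd i (pd j f) x = fderiv ℝ (fderiv ℝ f) x (Pi.single i 1) (Pi.single j 1) :=
    fun i j => by
      change fderiv ℝ (fun y => fderiv ℝ f y (Pi.single j 1)) x _ = _
      simp [fderiv_clm_apply hd (differentiableAt_const _)]
  rw [hpd, hpd, hsymm]

lemma pd_pd2_comm_left (hf : ContDiffAt ℝ 3 f x) (i j k : Fin n) :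
    pd i (pd2 j k f) x = pd j (pd2 i k f) x :=
  pd_pd_comm (hf.pd (by norm_num) k) i j

lemma pd_pd2_comm_right (hf : ContDiffAt ℝ 3 f x) (i j k : Fin n) :
    pd i (pd2 j k f) x = pd i (pd2 k j f) x := by
  refine pd_congr ?_ i
  filter_upwards [hf.eventually (by simp)] with y hy
  exact pd_pd_comm (hy.of_le (by norm_num)) j k

lemma pd_pd2_comm_outer (hf : ContDiffAt ℝ 3 f x) (i j k : Fin n) :
    pd i (pd2 j k f) x = pd k (pd2 j i f) x := by
  rw [pd_pd2_comm_right hf, pd_pd2_comm_left hf, pd_pd2_comm_right hf]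

lemma lieBr_apply {X Y : (Fin n → ℝ) → Fin n → ℝ} (hX : DifferentiableAt ℝ X x)
    (hY : DifferentiableAt ℝ Y x) (i : Fin n) :
    lieBr X Y x i = fderiv ℝ (fun y => Y y i) x (X x) - fderiv ℝ (fun y => X y i) x (Y x) := by
  simp [lieBr, fderiv_apply hX, fderiv_apply hY]

lemma fderiv_coord_mul (hg : DifferentiableAt ℝ g x) (k : Fin n) (v : Fin n → ℝ) :
    fderiv ℝ (fun y => y k * g y) x v = v k * g x + x k * fderiv ℝ g x v := by
  rw [fderiv_fun_mul (differentiableAt_apply k x) hg, (hasFDerivAt_coord k).fderiv]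
  simp only [add_apply, smul_apply, smul_eq_mul, ContinuousLinearMap.proj_apply]
  ring

lemma fderiv_const_sub_coord_div_coord (c : ℝ) (i : Fin n) {k : Fin n} (hx : x k ≠ 0)
    (v : Fin n → ℝ) :
    fderiv ℝ (fun y => (c - y i) / y k) x v = -(v i + (c - x i) / x k * v k) / x k := by
  have h : HasFDerivAt (fun y => (c - y i) * (y k)⁻¹) _ x :=
    ((hasFDerivAt_coord i).const_sub c).mul
      ((hasDerivAt_inv hx).comp_hasFDerivAt x (hasFDerivAt_coord k))
  simp only [← div_eq_mul_inv] at h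
  rw [h.fderiv]
  simp only [neg_smul, smul_neg, add_apply, neg_apply, smul_apply, smul_eq_mul,
    ContinuousLinearMap.proj_apply]
  field_simp
  ring

end PartialDerivatives

-- Indices are 0-based: `y 2` is the paper's `x₃` and `pd2 0 1 u` is `u₁₂`.
def heavenlyOp (u : (Fin 4 → ℝ) → ℝ) (y : Fin 4 → ℝ) : ℝ :=
  pd2 0 2 u y + pd2 1 3 u y + y 2 * (pd2 0 0 u y * pd2 1 1 u y - (pd2 0 1 u y) ^ 2)

def laxX (u : (Fin 4 → ℝ) → ℝ) (lam : ℝ) (x : Fin 4 → ℝ) : Fin 4 → ℝ :=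
  (Pi.single 3 1 : Fin 4 → ℝ)
    + (x 2 * pd2 0 0 u x) • (Pi.single 1 1 : Fin 4 → ℝ)
    - (x 2 * pd2 0 1 u x) • (Pi.single 0 1 : Fin 4 → ℝ)
    + ((lam - x 1) / x 2) • (Pi.single 0 1 : Fin 4 → ℝ)

def laxY (u : (Fin 4 → ℝ) → ℝ) (lam : ℝ) (x : Fin 4 → ℝ) : Fin 4 → ℝ :=
  (Pi.single 2 1 : Fin 4 → ℝ)
    + (x 2 * pd2 1 1 u x) • (Pi.single 0 1 : Fin 4 → ℝ)
    - (x 2 * pd2 0 1 u x) • (Pi.single 1 1 : Fin 4 → ℝ)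
    - ((lam - x 1) / x 2) • (Pi.single 1 1 : Fin 4 → ℝ)

section LaxPair

variable {u : (Fin 4 → ℝ) → ℝ} {x : Fin 4 → ℝ}

lemma laxX_eq (u : (Fin 4 → ℝ) → ℝ) (lam : ℝ) :
    laxX u lam = fun y => ![(lam - y 1) / y 2 - y 2 * pd2 0 1 u y, y 2 * pd2 0 0 u y, 0, 1] := by
  funext y i
  fin_cases i <;> simp [laxX, neg_add_eq_sub]

lemma laxY_eq (u : (Fin 4 → ℝ) → ℝ) (lam : ℝ) :
    laxY u lam = fun y => ![y 2 * pd2 1 1 u y, -(y 2 * pd2 0 1 u y) - (lam - y 1) / y 2, 1, 0] := by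
  funext y i
  fin_cases i <;> simp [laxY]

lemma fderiv_heavenlyOp (hu : ContDiffAt ℝ 3 u x) (v : Fin 4 → ℝ) :
    fderiv ℝ (heavenlyOp u) x v = fderiv ℝ (pd2 0 2 u) x v + fderiv ℝ (pd2 1 3 u) x v
      + v 2 * (pd2 0 0 u x * pd2 1 1 u x - (pd2 0 1 u x) ^ 2)
      + x 2 * (fderiv ℝ (pd2 0 0 u) x v * pd2 1 1 u x + pd2 0 0 u x * fderiv ℝ (pd2 1 1 u) x v
        - 2 * pd2 0 1 u x * fderiv ℝ (pd2 0 1 u) x v) := by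
  have hd := hu.differentiableAt_pd2
  have h : HasFDerivAt (heavenlyOp u) _ x := ((hd 0 2).hasFDerivAt.add (hd 1 3).hasFDerivAt).add
    ((hasFDerivAt_coord 2).mul
      (((hd 0 0).hasFDerivAt.mul (hd 1 1).hasFDerivAt).sub ((hd 0 1).hasFDerivAt.pow 2)))
  rw [h.fderiv]
  simp only [add_apply, sub_apply, smul_apply, smul_eq_mul, nsmul_eq_mul,
    ContinuousLinearMap.proj_apply]
  ring

lemma differentiableAt_laxX (hu : ContDiffAt ℝ 3 u x) (hx : x 2 ≠ 0) (lam : ℝ) :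
    DifferentiableAt ℝ (laxX u lam) x := by
  have := hu.differentiableAt_pd2
  unfold laxX
  fun_prop (disch := exact hx)

lemma differentiableAt_laxY (hu : ContDiffAt ℝ 3 u x) (hx : x 2 ≠ 0) (lam : ℝ) :
    DifferentiableAt ℝ (laxY u lam) x := by
  have := hu.differentiableAt_pd2
  unfold laxY
  fun_prop (disch := exact hx)

lemma lieBr_laxX_laxY_apply_zero (hu : ContDiffAt ℝ 3 u x) (hx : x 2 ≠ 0) (lam : ℝ) :
    lieBr (laxX u lam) (laxY u lam) x 0 = x 2 * pd 1 (heavenlyOp u) x := by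
  have hd := hu.differentiableAt_pd2
  rw [lieBr_apply (differentiableAt_laxX hu hx lam) (differentiableAt_laxY hu hx lam), laxX_eq,
    laxY_eq]
  simp only [Matrix.cons_val_zero]
  rw [fderiv_fun_sub (by fun_prop (disch := exact hx)) (by fun_prop), sub_apply,
    fderiv_coord_mul (hd 1 1), fderiv_coord_mul (hd 0 1), fderiv_const_sub_coord_div_coord lam 1 hx,
    pd, fderiv_heavenlyOp hu]
  simp only [fderiv_apply_eq_sum_pd, Fin.sum_univ_four, Matrix.cons_val_zero, Matrix.cons_val_one,
    Matrix.cons_val_two, Matrix.cons_val_three, Matrix.tail_cons, Matrix.head_cons, Pi.single_apply,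
    Fin.reduceEq, if_true, if_false]
  rw [pd_pd2_comm_left hu 0 1 1, pd_pd2_comm_outer hu 3 1 1, pd_pd2_comm_outer hu 2 0 1,
    pd_pd2_comm_outer hu 0 0 1]
  field_simp
  ring

lemma lieBr_laxX_laxY_apply_one (hu : ContDiffAt ℝ 3 u x) (hx : x 2 ≠ 0) (lam : ℝ) :
    lieBr (laxX u lam) (laxY u lam) x 1 = -(x 2 * pd 0 (heavenlyOp u) x) := by
  have hd := hu.differentiableAt_pd2
  rw [lieBr_apply (differentiableAt_laxX hu hx lam) (differentiableAt_laxY hu hx lam), laxX_eq,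
    laxY_eq]
  simp only [Matrix.cons_val_one, Matrix.cons_val_zero]
  rw [fderiv_fun_sub (by fun_prop) (by fun_prop (disch := exact hx)), sub_apply,
    fderiv_fun_neg, neg_apply, fderiv_coord_mul (hd 0 0),
    fderiv_coord_mul (hd 0 1), fderiv_const_sub_coord_div_coord lam 1 hx, pd, fderiv_heavenlyOp hu]
  simp only [fderiv_apply_eq_sum_pd, Fin.sum_univ_four, Matrix.cons_val_zero, Matrix.cons_val_one,
    Matrix.cons_val_two, Matrix.cons_val_three, Matrix.tail_cons, Matrix.head_cons, Pi.single_apply,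
    Fin.reduceEq, if_true, if_false]
  rw [pd_pd2_comm_left hu 1 0 1, pd_pd2_comm_left hu 3 0 1, pd_pd2_comm_right hu 0 3 1,
    pd_pd2_comm_outer hu 1 0 0, pd_pd2_comm_outer hu 2 0 0]
  field_simp
  ring

lemma lieBr_laxX_laxY (hu : ContDiffAt ℝ 3 u x) (hx : x 2 ≠ 0) (lam : ℝ) :
    lieBr (laxX u lam) (laxY u lam) x
      = ![x 2 * pd 1 (heavenlyOp u) x, -(x 2 * pd 0 (heavenlyOp u) x), 0, 0] := by
  ext i
  fin_cases i
  · exact lieBr_laxX_laxY_apply_zero hu hx lam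
  · exact lieBr_laxX_laxY_apply_one hu hx lam
  all_goals
    rw [lieBr_apply (differentiableAt_laxX hu hx lam) (differentiableAt_laxY hu hx lam), laxX_eq,
      laxY_eq]
    simp

end LaxPair

/-- Lax pair (Frobenius integrability) for the deformed second heavenly
equation with `f = x₃`, for every value of the spectral parameter `λ`. -/
theorem statement11 (U : Set (Fin 4 → ℝ)) (hU : IsOpen U)
    (hU3 : ∀ x ∈ U, x 2 ≠ 0)
    (u : (Fin 4 → ℝ) → ℝ) (hu : ContDiffOn ℝ ∞ u U)
    (hsol : ∀ x ∈ U,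
      pd2 0 2 u x + pd2 1 3 u x
        + x 2 * (pd2 0 0 u x * pd2 1 1 u x - (pd2 0 1 u x) ^ 2) = 0)
    (X Y : ℝ → (Fin 4 → ℝ) → (Fin 4 → ℝ))
    (hX : X = fun lam x => (Pi.single 3 1 : Fin 4 → ℝ)
        + (x 2 * pd2 0 0 u x) • (Pi.single 1 1 : Fin 4 → ℝ)
        - (x 2 * pd2 0 1 u x) • (Pi.single 0 1 : Fin 4 → ℝ)
        + ((lam - x 1) / x 2) • (Pi.single 0 1 : Fin 4 → ℝ))
    (hY : Y = fun lam x => (Pi.single 2 1 : Fin 4 → ℝ)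
        + (x 2 * pd2 1 1 u x) • (Pi.single 0 1 : Fin 4 → ℝ)
        - (x 2 * pd2 0 1 u x) • (Pi.single 1 1 : Fin 4 → ℝ)
        - ((lam - x 1) / x 2) • (Pi.single 1 1 : Fin 4 → ℝ)) :
    ∀ lam : ℝ, ∀ x ∈ U,
      lieBr (X lam) (Y lam) x ∈ Submodule.span ℝ {X lam x, Y lam x} := by
  intro lam x hx
  have hux : ContDiffAt ℝ 3 u x :=
    (hu.contDiffAt (hU.mem_nhds hx)).of_le (WithTop.coe_le_coe.2 le_top)
  have hF (i : Fin 4) : pd i (heavenlyOp u) x = 0 := by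
    have hzero : heavenlyOp u =ᶠ[𝓝 x] fun _ => 0 := by
      filter_upwards [hU.mem_nhds hx] using hsol
    rw [pd_congr hzero]
    simp [pd]
  have hbracket : lieBr (X lam) (Y lam) x = 0 := by
    subst hX hY
    change lieBr (laxX u lam) (laxY u lam) x = 0
    simp [lieBr_laxX_laxY hux (hU3 x hx), hF]
  simp [hbracket]
end
end

section
/- Let U ⊆ ℝ⁴ be open and let u : U → ℝ be a smooth solution of the first heavenly equation u₁₃u₂₄ − u₁₄u₂₃ = 1 on U. Then for every λ ∈ ℝ, the vector fields X = u₁₃∂₄ − u₁₄∂₃ + λ∂₁ and Y = u₂₃∂₄ − u₂₄∂₃ + λ∂₂ satisfy [X,Y] = 0 identically on U. -/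
open scoped ContDiff

noncomputable section

/-! Write `a = u₁₃`, `b = u₁₄`, `c = u₂₃`, `d = u₂₄`, so that `X = a∂₄ − b∂₃ + λ∂₁` and
`Y = c∂₄ − d∂₃ + λ∂₂`. The bracket only has the components `Xc − Ya` along `∂₄` and `Yb − Xd`
along `∂₃`. By the symmetry of third derivatives the `λ`-terms cancel (`∂₁c = ∂₂a`,
`∂₁d = ∂₂b`) and what remains is `∂₃(ad − bc)` and `−∂₄(ad − bc)`, which vanish because
`ad − bc ≡ 1` on `U`. (Coordinates are numbered from 1 here and from 0 in the code.) -/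

section

variable {n : ℕ} {U : Set (Fin n → ℝ)} {f g : (Fin n → ℝ) → ℝ} {x : Fin n → ℝ}

@[simp]
theorem fderiv_apply_single (i : Fin n) : fderiv ℝ f x (Pi.single i 1) = pd i f x :=
  rfl

theorem contDiffOn_pd {k m : WithTop ℕ∞} (hU : IsOpen U) (hf : ContDiffOn ℝ k f U)
    (hmk : m + 1 ≤ k) (i : Fin n) : ContDiffOn ℝ m (pd i f) U :=
  (hf.fderiv_of_isOpen hU hmk).clm_apply contDiffOn_const

theorem pd_congr_of_eqOn (hU : IsOpen U) (h : Set.EqOn f g U) (hx : x ∈ U) (i : Fin n) :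
    pd i f x = pd i g x := by
  rw [pd, pd, (Filter.eventuallyEq_of_mem (hU.mem_nhds hx) h).fderiv_eq]

theorem pd_comm (hU : IsOpen U) (hf : ContDiffOn ℝ 2 f U) (hx : x ∈ U) (i j : Fin n) :
    pd i (pd j f) x = pd j (pd i f) x := by
  have hsymm : IsSymmSndFDerivAt ℝ f x :=
    (hf.contDiffAt (hU.mem_nhds hx)).isSymmSndFDerivAt (by simp)
  have hdiff : DifferentiableAt ℝ (fderiv ℝ f) x :=
    ((hf.fderiv_of_isOpen (m := 1) hU (by norm_num)).contDiffAt
      (hU.mem_nhds hx)).differentiableAt one_ne_zero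
  have hpd : ∀ k l : Fin n,
      pd k (pd l f) x = fderiv ℝ (fderiv ℝ f) x (Pi.single k 1) (Pi.single l 1) := by
    intro k l
    change fderiv ℝ (fun y => fderiv ℝ f y (Pi.single l 1)) x (Pi.single k 1) = _
    rw [fderiv_clm_apply hdiff (differentiableAt_const _)]
    simp
  rw [hpd, hpd, hsymm]

theorem pd_pd_pd_swap (hU : IsOpen U) (hf : ContDiffOn ℝ 3 f U) (hx : x ∈ U) (i j k : Fin n) :
    pd i (pd j (pd k f)) x = pd k (pd j (pd i f)) x := by
  have hf2 : ContDiffOn ℝ 2 f U := hf.of_le (by norm_num)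
  have hpd2 : ∀ l, ContDiffOn ℝ 2 (pd l f) U := fun l => contDiffOn_pd hU hf (by norm_num) l
  calc pd i (pd j (pd k f)) x = pd j (pd i (pd k f)) x := pd_comm hU (hpd2 k) hx i j
    _ = pd j (pd k (pd i f)) x :=
      pd_congr_of_eqOn hU (fun y hy => pd_comm hU hf2 hy i k) hx j
    _ = pd k (pd j (pd i f)) x := pd_comm hU (hpd2 i) hx j k

theorem pd_mul_sub_mul_eq_zero {a b c d : (Fin n → ℝ) → ℝ} {r : ℝ} (hU : IsOpen U)
    (h : ∀ y ∈ U, a y * d y - b y * c y = r) (hx : x ∈ U)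
    (ha : DifferentiableAt ℝ a x) (hb : DifferentiableAt ℝ b x)
    (hc : DifferentiableAt ℝ c x) (hd : DifferentiableAt ℝ d x) (k : Fin n) :
    a x * pd k d x + d x * pd k a x - (b x * pd k c x + c x * pd k b x) = 0 := by
  have hconst : pd k (fun y => a y * d y - b y * c y) x = 0 := by
    rw [pd_congr_of_eqOn hU h hx, pd, fderiv_const_apply, zero_apply]
  rw [pd, fderiv_fun_sub (ha.fun_mul hd) (hb.fun_mul hc), fderiv_fun_mul ha hd,
    fderiv_fun_mul hb hc] at hconst
  simpa using hconst

theorem fderiv_smul_sub_smul_add_const {A B : (Fin n → ℝ) → ℝ} (e₁ e₂ v : Fin n → ℝ)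
    (hA : DifferentiableAt ℝ A x) (hB : DifferentiableAt ℝ B x) :
    fderiv ℝ (fun y => A y • e₁ - B y • e₂ + v) x
      = (fderiv ℝ A x).smulRight e₁ - (fderiv ℝ B x).smulRight e₂ := by
  rw [fderiv_add_const, fderiv_fun_sub (hA.smul_const e₁) (hB.smul_const e₂),
    fderiv_smul_const hA, fderiv_smul_const hB]

theorem lieBr_of_eq_smul_sub_smul_add_const {X Y : (Fin n → ℝ) → Fin n → ℝ}
    {A B C D : (Fin n → ℝ) → ℝ} {e₁ e₂ v w : Fin n → ℝ}
    (hX : X = fun y => A y • e₁ - B y • e₂ + v) (hY : Y = fun y => C y • e₁ - D y • e₂ + w)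
    (hA : DifferentiableAt ℝ A x) (hB : DifferentiableAt ℝ B x)
    (hC : DifferentiableAt ℝ C x) (hD : DifferentiableAt ℝ D x) :
    lieBr X Y x = (fderiv ℝ C x (X x) - fderiv ℝ A x (Y x)) • e₁
      - (fderiv ℝ D x (X x) - fderiv ℝ B x (Y x)) • e₂ := by
  rw [lieBr, hX, hY, fderiv_smul_sub_smul_add_const e₁ e₂ v hA hB,
    fderiv_smul_sub_smul_add_const e₁ e₂ w hC hD]
  simp only [sub_apply, ContinuousLinearMap.smulRight_apply, sub_smul]
  abel

end

/-- the Lax pair of the first heavenly equation `u₁₃u₂₄ − u₁₄u₂₃ = 1`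
commutes identically on solutions, for every `λ`. -/
theorem statement14 (U : Set (Fin 4 → ℝ)) (hU : IsOpen U)
    (u : (Fin 4 → ℝ) → ℝ) (hu : ContDiffOn ℝ ∞ u U)
    (hsol : ∀ x ∈ U, pd2 0 2 u x * pd2 1 3 u x - pd2 0 3 u x * pd2 1 2 u x = 1)
    (lam : ℝ)
    (X Y : (Fin 4 → ℝ) → (Fin 4 → ℝ))
    (hX : X = fun x => pd2 0 2 u x • (Pi.single 3 1 : Fin 4 → ℝ)
        - pd2 0 3 u x • (Pi.single 2 1 : Fin 4 → ℝ)
        + lam • (Pi.single 0 1 : Fin 4 → ℝ))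
    (hY : Y = fun x => pd2 1 2 u x • (Pi.single 3 1 : Fin 4 → ℝ)
        - pd2 1 3 u x • (Pi.single 2 1 : Fin 4 → ℝ)
        + lam • (Pi.single 1 1 : Fin 4 → ℝ)) :
    ∀ x ∈ U, lieBr X Y x = 0 := by
  intro x hx
  have hu3 : ContDiffOn ℝ 3 u U := hu.of_le (WithTop.coe_le_coe.2 le_top)
  have hu2 (k : Fin 4) : ContDiffOn ℝ 2 (pd k u) U := contDiffOn_pd hU hu3 (by norm_num) k
  have hdiff (i j : Fin 4) : DifferentiableAt ℝ (pd2 i j u) x :=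
    ((contDiffOn_pd (m := 1) hU (hu2 j) le_rfl i).contDiffAt (hU.mem_nhds hx)).differentiableAt
      one_ne_zero
  have hdet := pd_mul_sub_mul_eq_zero hU hsol hx (hdiff 0 2) (hdiff 0 3) (hdiff 1 2) (hdiff 1 3)
  have hc₁ : pd 0 (pd2 1 2 u) x = pd 1 (pd2 0 2 u) x := pd_comm hU (hu2 2) hx 0 1
  have hd₁ : pd 0 (pd2 1 3 u) x = pd 1 (pd2 0 3 u) x := pd_comm hU (hu2 3) hx 0 1
  have hd₂ : pd 2 (pd2 1 3 u) x = pd 3 (pd2 1 2 u) x := pd_pd_pd_swap hU hu3 hx 2 1 3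
  have hb₂ : pd 2 (pd2 0 3 u) x = pd 3 (pd2 0 2 u) x := pd_pd_pd_swap hU hu3 hx 2 0 3
  rw [lieBr_of_eq_smul_sub_smul_add_const hX hY (hdiff 0 2) (hdiff 0 3) (hdiff 1 2) (hdiff 1 3)]
  subst hX hY
  simp only [map_add, map_sub, map_smul, smul_eq_mul, fderiv_apply_single]
  linear_combination (norm := module)
    (hdet 2 - pd2 0 2 u x * hd₂ + pd2 1 2 u x * hb₂ + lam * hc₁) • (Pi.single 3 1 : Fin 4 → ℝ)
      - (hdet 3 - pd2 0 3 u x * hd₂ + pd2 1 3 u x * hb₂ + lam * hd₁) • (Pi.single 2 1 : Fin 4 → ℝ)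
end
end
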